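/- arXiv:1003.0115 — 5 statements merged into one kernel-verified Lean document; each statement's English description precedes it below -/
import Mathlib

section
/- Let G = (V, E) be a finite connected graph with N vertices, let ε ∈ [0,1) with ε < 1, and let χ = χ(G) be the chromatic number of G. If ε < 1/(χ − 1), then μ_ε(G) = N, i.e., there exists an ε-stable configuration η : V → [0,1] that is injective. -/
open Set

/-- A configuration `η` is `ε`-stable for the graph `G` if along every edge the
opinions either agree or differ by more than `ε`. -/
def IsStable {V : Type*} (G : SimpleGraph V) (ε : ℝ) (η : V → ℝ) : Prop :=
  ∀ ⦃x y : V⦄, G.Adj x y → η x = η y ∨ ε < |η x - η y|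

/-- The `ε`-opinion index of `G`: the maximum number of distinct opinions taken
by an `ε`-stable configuration `η : V → [0,1]`. -/
noncomputable def opinionIndex {V : Type*} (G : SimpleGraph V) (ε : ℝ) : ℕ :=
  sSup {n : ℕ | ∃ η : V → ℝ,
    (∀ x, η x ∈ Set.Icc (0 : ℝ) 1) ∧ IsStable G ε η ∧ (Set.range η).ncard = n}
/-!
Properly colour `G` with `k` colours and put a vertex of colour `i` at `i * δ + ι x`, where `ι`
is injective with values in `[0, s)`. Adjacent vertices have different colours, so their opinions
differ by more than `δ - s`, which is at least `ε` for `δ = ε + 2s`; the perturbation `ι` makes the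
configuration injective, and all values fit in `[0, 1]` for small `s` because
`ε * (k - 1) < 1`. An injective configuration attains the trivial bound `N` on the number of
opinions.
-/

open Function

lemma lt_abs_natCast_mul_add_sub {a b : ℕ} (hab : a ≠ b) {ε δ s u v : ℝ} (hε : 0 ≤ ε)
    (hδ : ε + s ≤ δ) (hu : u ∈ Ico 0 s) (hv : v ∈ Ico 0 s) :
    ε < |(a * δ + u) - (b * δ + v)| := by
  obtain ⟨hu0, hus⟩ := hu
  obtain ⟨hv0, hvs⟩ := hv
  rcases hab.lt_or_gt with hlt | hlt
  · have hab' : (a : ℝ) + 1 ≤ b := by exact_mod_cast hlt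
    rw [abs_sub_comm, lt_abs]
    left; nlinarith
  · have hab' : (b : ℝ) + 1 ≤ a := by exact_mod_cast hlt
    rw [lt_abs]
    left; nlinarith

lemma exists_injective_mem_Ico (V : Type*) [Finite V] {s : ℝ} (hs : 0 < s) :
    ∃ ι : V → ℝ, Injective ι ∧ ∀ x, ι x ∈ Ico 0 s := by
  have := (Ico_infinite hs).to_subtype
  obtain ⟨n, ⟨e⟩⟩ := Finite.exists_equiv_fin V
  let ι : V → Ico 0 s := Infinite.natEmbedding _ ∘ Fin.val ∘ e
  exact ⟨Subtype.val ∘ ι, Subtype.val_injective.comp <|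
    (Infinite.natEmbedding _).injective.comp <| Fin.val_injective.comp e.injective,
    fun x ↦ (ι x).2⟩

section Coloring

variable {V : Type*} {G : SimpleGraph V} {k : ℕ} (C : G.Coloring (Fin k)) {ε δ s : ℝ}
  {ι : V → ℝ}

lemma isStable_coloring_mul_add (hε : 0 ≤ ε) (hδ : ε + s ≤ δ) (hι : ∀ x, ι x ∈ Ico 0 s) :
    IsStable G ε (fun x ↦ (C x : ℕ) * δ + ι x) := fun _ _ hxy ↦
  Or.inr <| lt_abs_natCast_mul_add_sub (Fin.val_injective.ne (C.valid hxy)) hε hδ (hι _) (hι _)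

lemma injective_coloring_mul_add (hε : 0 ≤ ε) (hδ : ε + s ≤ δ) (hι : ∀ x, ι x ∈ Ico 0 s)
    (hιinj : Injective ι) : Injective (fun x ↦ (C x : ℕ) * δ + ι x) := by
  intro x y hxy
  by_cases hC : C x = C y
  · apply hιinj
    simpa [hC] using hxy
  · have := lt_abs_natCast_mul_add_sub (Fin.val_injective.ne hC) hε hδ (hι x) (hι y)
    simp only at hxy
    rw [hxy, sub_self, abs_zero] at this
    exact absurd hε this.not_ge

lemma coloring_mul_add_mem_Icc (hδ : 0 ≤ δ) (hk : ((k : ℝ) - 1) * δ + s ≤ 1)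
    (hι : ∀ x, ι x ∈ Ico 0 s) (x : V) : (C x : ℕ) * δ + ι x ∈ Icc (0 : ℝ) 1 := by
  have hCx : ((C x : ℕ) : ℝ) + 1 ≤ k := by exact_mod_cast (C x).isLt
  obtain ⟨hι0, hιs⟩ := hι x
  constructor
  · positivity
  · nlinarith

end Coloring

theorem exists_injective_isStable_of_colorable {V : Type*} [Finite V] {G : SimpleGraph V}
    {k : ℕ} (hG : G.Colorable k) {ε : ℝ} (hε : 0 ≤ ε) (hεk : ε * (k - 1) < 1) :
    ∃ η : V → ℝ, (∀ x, η x ∈ Icc (0 : ℝ) 1) ∧ IsStable G ε η ∧ Injective η := by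
  obtain ⟨C⟩ := hG
  -- `s` is the room left for the perturbation once `k - 1` gaps of width `δ = ε + 2s` are spent
  set s : ℝ := (1 - ε * (k - 1)) / (2 * k + 1) with hs_def
  have hs : 0 < s := div_pos (by linarith) (by positivity)
  obtain ⟨ι, hιinj, hι⟩ := exists_injective_mem_Ico V hs
  have hδ : ε + s ≤ ε + 2 * s := by linarith
  have hk : ((k : ℝ) - 1) * (ε + 2 * s) + s ≤ 1 := by
    have : (2 * k + 1) * s = 1 - ε * (k - 1) := by rw [hs_def]; field_simp
    nlinarith
  exact ⟨_, coloring_mul_add_mem_Icc C (by linarith) hk hι, isStable_coloring_mul_add C hε hδ hι,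
    injective_coloring_mul_add C hε hδ hι hιinj⟩

lemma opinionIndex_eq_card_of_injective {V : Type*} [Fintype V] {G : SimpleGraph V} {ε : ℝ}
    {η : V → ℝ} (hη : ∀ x, η x ∈ Icc (0 : ℝ) 1) (hstable : IsStable G ε η)
    (hinj : Injective η) : opinionIndex G ε = Fintype.card V := by
  rw [← Nat.card_eq_fintype_card]
  refine IsGreatest.csSup_eq ⟨⟨η, hη, hstable, ncard_range_of_injective hinj⟩, ?_⟩
  rintro _ ⟨η', -, -, rfl⟩
  exact Finite.card_range_le η'

theorem stmt0_general {V : Type*} [Fintype V] (G : SimpleGraph V)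
    (ε : ℝ) (hε0 : 0 ≤ ε) (χ : ℕ) (hχ : G.chromaticNumber = (χ : ℕ∞))
    (h : ε < 1 / ((χ : ℝ) - 1)) :
    opinionIndex G ε = Fintype.card V ∧
      ∃ η : V → ℝ, (∀ x, η x ∈ Set.Icc (0 : ℝ) 1) ∧ IsStable G ε η ∧
        Function.Injective η := by
  have hχ1 : (0 : ℝ) < χ - 1 := one_div_pos.mp (hε0.trans_lt h)
  have hcol : G.Colorable χ := SimpleGraph.chromaticNumber_le_iff_colorable.mp hχ.le
  obtain ⟨η, hη, hstable, hinj⟩ :=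
    exists_injective_isStable_of_colorable hcol hε0 ((lt_div_iff₀ hχ1).mp h)
  exact ⟨opinionIndex_eq_card_of_injective hη hstable hinj, η, hη, hstable, hinj⟩

theorem stmt0 {V : Type*} [Fintype V] (G : SimpleGraph V) (hG : G.Connected)
    (ε : ℝ) (hε0 : 0 ≤ ε) (hε1 : ε < 1) (χ : ℕ) (hχ : G.chromaticNumber = (χ : ℕ∞))
    (h : ε < 1 / ((χ : ℝ) - 1)) :
    opinionIndex G ε = Fintype.card V ∧
      ∃ η : V → ℝ, (∀ x, η x ∈ Set.Icc (0 : ℝ) 1) ∧ IsStable G ε η ∧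
        Function.Injective η :=
  stmt0_general G ε hε0 χ hχ h
end

section
/- Let G = (V, E) be a finite connected graph with N vertices and let ε ∈ (0,1]. If W ⊆ V is a clique of maximum cardinality ω(G) and π(G) denotes the subgraph of G induced by the vertex set V ∖ W, then μ_ε(G) ≤ min(ω(G), ⌈ε⁻¹⌉) + μ_ε(π(G)), where ⌈a⌉ denotes the least integer not less than a. -/
open Set

/-!
On a clique all opinions that differ are more than `ε` apart, so the clique carries at most
`min ω ⌈ε⁻¹⌉` distinct opinions: cut `[0,1]` into `⌈ε⁻¹⌉` closed bins of width at most `ε`,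
each of which holds at most one of them. The remaining opinions are those of the restriction
of the configuration to the induced subgraph on the complement, which is again stable.
-/

lemma min_floor_pred_le_and_le_add_one {x : ℝ} {k : ℕ} (hk : 0 < k) (hx0 : 0 ≤ x)
    (hxk : x ≤ k) : ((min ⌊x⌋₊ (k - 1) : ℕ) : ℝ) ≤ x ∧ x ≤ (min ⌊x⌋₊ (k - 1) : ℕ) + 1 := by
  refine ⟨le_trans (by exact_mod_cast min_le_left _ _) (Nat.floor_le hx0), ?_⟩
  rcases min_cases ⌊x⌋₊ (k - 1) with ⟨h, -⟩ | ⟨h, -⟩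
  · rw [h]; exact (Nat.lt_floor_add_one x).le
  · rw [h, Nat.cast_pred hk]; linarith

lemma ncard_le_ceil_inv_of_pairwise_lt_abs_sub {ε : ℝ} (hε : 0 < ε) {s : Set ℝ}
    (hs : s ⊆ Icc 0 1) (hsep : s.Pairwise fun a b => ε < |a - b|) :
    s.ncard ≤ ⌈ε⁻¹⌉₊ := by
  set k := ⌈ε⁻¹⌉₊
  have hk : 0 < k := Nat.ceil_pos.2 (inv_pos.2 hε)
  have hkε : 1 ≤ k * ε := (inv_le_iff_one_le_mul₀ hε).1 (Nat.le_ceil ε⁻¹)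
  have bin_spec : ∀ a ∈ s, ((min ⌊a * k⌋₊ (k - 1) : ℕ) : ℝ) ≤ a * k ∧
      a * k ≤ (min ⌊a * k⌋₊ (k - 1) : ℕ) + 1 := fun a ha =>
    min_floor_pred_le_and_le_add_one hk (by positivity [(hs ha).1])
      (mul_le_of_le_one_left k.cast_nonneg (hs ha).2)
  calc s.ncard ≤ (Iio k).ncard := by
        refine ncard_le_ncard_of_injOn (fun a => min ⌊a * k⌋₊ (k - 1)) (fun a _ => ?_)
          (fun a ha b hb hab => ?_) (finite_Iio k)
        · exact lt_of_le_of_lt (min_le_right _ _) (Nat.sub_lt hk one_pos)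
        · by_contra hne
          obtain ⟨ha₁, ha₂⟩ := bin_spec a ha
          obtain ⟨hb₁, hb₂⟩ := bin_spec b hb
          have hab' : ((min ⌊a * k⌋₊ (k - 1) : ℕ) : ℝ) = (min ⌊b * k⌋₊ (k - 1) : ℕ) :=
            congrArg _ hab
          have hclose : |a * k - b * k| ≤ 1 := abs_sub_le_iff.2 ⟨by linarith, by linarith⟩
          rw [← sub_mul, abs_mul, abs_of_pos (Nat.cast_pos.2 hk : (0 : ℝ) < k)] at hclose
          nlinarith [hsep ha hb hne]
    _ = k := ncard_Iio_nat k

namespace IsStable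

variable {V : Type*} {G : SimpleGraph V} {ε : ℝ} {η : V → ℝ}

lemma comap {V' : Type*} {G' : SimpleGraph V'} (hη : IsStable G ε η) (f : G' →g G) :
    IsStable G' ε (η ∘ f) :=
  fun _ _ h => hη (f.map_adj h)

lemma pairwise_image_of_isClique (hη : IsStable G ε η) {s : Set V} (hs : G.IsClique s) :
    (η '' s).Pairwise fun a b => ε < |a - b| := by
  rintro _ ⟨x, hx, rfl⟩ _ ⟨y, hy, rfl⟩ hne
  exact (hη (hs hx hy fun h => hne (h ▸ rfl))).resolve_left hne

lemma ncard_image_le_min_of_isClique (hη : IsStable G ε η) (hε : 0 < ε)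
    (hη01 : ∀ x, η x ∈ Icc 0 1) {W : Finset V} (hW : G.IsClique (W : Set V)) :
    (η '' W).ncard ≤ min W.card ⌈ε⁻¹⌉₊ :=
  le_min ((ncard_image_le W.finite_toSet).trans (ncard_coe_finset W).le)
    (ncard_le_ceil_inv_of_pairwise_lt_abs_sub hε (image_subset_iff.2 fun x _ => hη01 x)
      (hη.pairwise_image_of_isClique hW))

end IsStable

section opinionIndex

variable {V : Type*} {G : SimpleGraph V} {ε : ℝ}

lemma opinionIndex_le {n : ℕ}
    (h : ∀ η : V → ℝ, (∀ x, η x ∈ Icc 0 1) → IsStable G ε η → (range η).ncard ≤ n) :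
    opinionIndex G ε ≤ n :=
  csSup_le' fun _ ⟨η, hη01, hη, hn⟩ => hn ▸ h η hη01 hη

lemma ncard_range_le_opinionIndex [Finite V] {η : V → ℝ} (hη01 : ∀ x, η x ∈ Icc 0 1)
    (hη : IsStable G ε η) : (range η).ncard ≤ opinionIndex G ε :=
  le_csSup ⟨Nat.card V, fun _ ⟨η', _, _, hn⟩ => hn ▸ image_univ (f := η') ▸
    (ncard_image_le finite_univ).trans (ncard_univ V).le⟩ ⟨η, hη01, hη, rfl⟩

end opinionIndex

theorem stmt2_general {V : Type*} [Fintype V] (G : SimpleGraph V)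
    (ε : ℝ) (hε0 : 0 < ε)
    (W : Finset V) (hW : G.IsClique (W : Set V)) :
    opinionIndex G ε ≤
      min W.card ⌈ε⁻¹⌉₊ + opinionIndex (G.induce {x : V | x ∉ W}) ε := by
  refine opinionIndex_le fun η hη01 hη => ?_
  have hrange : range η = η '' W ∪ range fun x : {x : V | x ∉ W} => η x := by
    rw [← image_eq_range, ← image_union, ← image_univ]
    exact congrArg _ (union_compl_self _).symm
  have hrest : (range fun x : {x : V | x ∉ W} => η x).ncard ≤
      opinionIndex (G.induce {x : V | x ∉ W}) ε :=
    ncard_range_le_opinionIndex (fun x => hη01 x) (hη.comap (SimpleGraph.Embedding.induce _).toHom)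
  calc (range η).ncard ≤ (η '' W).ncard + (range fun x : {x : V | x ∉ W} => η x).ncard :=
        hrange ▸ ncard_union_le _ _
    _ ≤ _ := add_le_add (hη.ncard_image_le_min_of_isClique hε0 hη01 hW) hrest

theorem stmt2 {V : Type*} [Fintype V] [DecidableEq V] (G : SimpleGraph V)
    (hG : G.Connected) (ε : ℝ) (hε0 : 0 < ε) (hε1 : ε ≤ 1)
    (W : Finset V) (hW : G.IsClique (W : Set V))
    (hmax : ∀ W' : Finset V, G.IsClique (W' : Set V) → W'.card ≤ W.card) :
    opinionIndex G ε ≤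
      min W.card ⌈ε⁻¹⌉₊ + opinionIndex (G.induce {x : V | x ∉ W}) ε :=
  stmt2_general G ε hε0 W hW
end

section
/- Let G = (V, E) be a finite graph and let ε ∈ (0,1]. If V is partitioned into sets W_1, …, W_k each of which is a clique of G, then μ_ε(G) ≤ Σ_{i=1}^{k} min(card(W_i), ⌈ε⁻¹⌉), where ⌈a⌉ denotes the least integer not less than a. -/
open Set

lemma key_sep (ε : ℝ) (hε0 : 0 < ε) (S : Finset ℝ)
    (hS : ∀ s ∈ S, s ∈ Set.Icc (0:ℝ) 1)
    (hsep : ∀ a ∈ S, ∀ b ∈ S, a ≠ b → ε < |a - b|) :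
    S.card ≤ ⌈ε⁻¹⌉₊ := by
  rcases S.eq_empty_or_nonempty with rfl | hne
  · simp
  have hceil1 : 1 ≤ ⌈ε⁻¹⌉₊ := Nat.one_le_ceil_iff.mpr (by positivity)
  set m := S.min' hne with hm
  have hmS : m ∈ S := S.min'_mem hne
  have hmono : ∀ a ∈ S.erase m, ∀ b ∈ S.erase m, a < b →
      ⌈(a - m)/ε⌉₊ < ⌈(b - m)/ε⌉₊ := by
    intro a ha b hb hab
    have haS := S.mem_of_mem_erase ha
    have hbS := S.mem_of_mem_erase hb
    have hgap : ε < b - a := by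
      have := hsep a haS b hbS hab.ne
      rwa [abs_sub_comm, abs_of_pos (by linarith)] at this
    have hma : 0 ≤ (a - m)/ε :=
      div_nonneg (by have := S.min'_le a haS; linarith) hε0.le
    have : (a - m)/ε + 1 < (b - m)/ε := by
      rw [lt_div_iff₀ hε0, add_mul, div_mul_cancel₀ _ hε0.ne', one_mul]; linarith
    calc ⌈(a - m)/ε⌉₊ < ⌈(a - m)/ε⌉₊ + 1 := Nat.lt_succ_self _
      _ = ⌈(a - m)/ε + 1⌉₊ := (Nat.ceil_add_one hma).symm
      _ ≤ ⌈(b - m)/ε⌉₊ := Nat.ceil_le_ceil this.le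
  have hinj : Set.InjOn (fun s => ⌈(s - m)/ε⌉₊) (S.erase m) := by
    intro a ha b hb hab
    rcases lt_trichotomy a b with h | h | h
    · exact absurd hab (hmono a ha b hb h).ne
    · exact h
    · exact absurd hab.symm (hmono b hb a ha h).ne
  have hmaps : ∀ s ∈ S.erase m, ⌈(s - m)/ε⌉₊ ∈ Finset.Icc 2 ⌈ε⁻¹⌉₊ := by
    intro s hs
    have hsS := S.mem_of_mem_erase hs
    have hgap : ε < s - m := by
      have hne' := Finset.ne_of_mem_erase hs
      have hle := S.min'_le s hsS
      have := hsep s hsS m hmS hne'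
      rwa [abs_of_nonneg (by linarith)] at this
    have h1 : (1:ℝ) < (s - m)/ε := (one_lt_div hε0).mpr hgap
    have h2 : (s - m)/ε ≤ ε⁻¹ := by
      rw [div_le_iff₀ hε0, inv_mul_cancel₀ hε0.ne']
      have := (hS s hsS).2
      have := (hS m hmS).1
      linarith
    refine Finset.mem_Icc.mpr ⟨?_, Nat.ceil_le_ceil h2⟩
    exact Nat.lt_ceil.mpr (by exact_mod_cast h1)
  have hcard : (S.erase m).card ≤ (Finset.Icc 2 ⌈ε⁻¹⌉₊).card :=
    Finset.card_le_card_of_injOn _ hmaps hinj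
  rw [Nat.card_Icc] at hcard
  have := Finset.card_erase_of_mem hmS
  omega

theorem stmt3 {V : Type*} [Fintype V] [DecidableEq V] (G : SimpleGraph V)
    (ε : ℝ) (hε0 : 0 < ε) (hε1 : ε ≤ 1) (k : ℕ) (W : Fin k → Finset V)
    (hdisj : ∀ i j, i ≠ j → Disjoint (W i) (W j))
    (hcover : ∀ x : V, ∃ i, x ∈ W i)
    (hclique : ∀ i, G.IsClique ((W i : Set V))) :
    opinionIndex G ε ≤ ∑ i, min (W i).card ⌈ε⁻¹⌉₊ := by
  classical
  apply csSup_le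
  · exact ⟨(Set.range (fun _ : V => (0:ℝ))).ncard, fun _ => (0:ℝ),
      fun x => ⟨le_refl 0, zero_le_one⟩, fun x y _ => Or.inl rfl, rfl⟩
  rintro n ⟨η, hrange, hstab, rfl⟩
  have hT : Set.range η = ↑(Finset.univ.image η) := by
    ext t; simp
  rw [hT, Set.ncard_coe_finset]
  have hsub : Finset.univ.image η ⊆ Finset.univ.biUnion (fun i => (W i).image η) := by
    intro t ht
    obtain ⟨x, -, rfl⟩ := Finset.mem_image.mp ht
    obtain ⟨i, hi⟩ := hcover x
    exact Finset.mem_biUnion.mpr ⟨i, Finset.mem_univ i,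
      Finset.mem_image.mpr ⟨x, hi, rfl⟩⟩
  calc (Finset.univ.image η).card
      ≤ (Finset.univ.biUnion (fun i => (W i).image η)).card :=
        Finset.card_le_card hsub
    _ ≤ ∑ i, ((W i).image η).card := Finset.card_biUnion_le
    _ ≤ ∑ i, min (W i).card ⌈ε⁻¹⌉₊ := by
        apply Finset.sum_le_sum
        intro i _
        refine le_min (Finset.card_image_le) ?_
        apply key_sep ε hε0
        · intro s hs
          obtain ⟨x, -, rfl⟩ := Finset.mem_image.mp hs
          exact hrange x
        · intro a ha b hb hab
          obtain ⟨x, hx, rfl⟩ := Finset.mem_image.mp ha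
          obtain ⟨y, hy, rfl⟩ := Finset.mem_image.mp hb
          have hxy : x ≠ y := fun h => hab (by rw [h])
          have hadj := hclique i hx hy hxy
          rcases hstab hadj with h | h
          · exact absurd h hab
          · exact h
end

section
/- Let G = (V, E) be a finite connected graph with N vertices and assume 1/2 < ε < 1. Then μ_ε(G) = N (equivalently, there exists an injective ε-stable configuration η : V → [0,1]) if and only if the graph G is bipartite. -/
/-!
If `η` is injective and `ε`-stable with `ε ≥ 1/2`, adjacent opinions differ by more than `1/2`,
so which side of `1/2` an opinion lies on is a proper 2-colouring. Conversely, given a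
2-colouring, put the vertices of one class at distinct points of `[0, δ)` and those of the other
at distinct points of `(1 - δ, 1]`, with `δ = (1 - ε) / 2`: opinions of differently coloured
vertices then differ by more than `ε`.
-/

open Set

open Function

section

variable {V : Type*}

lemma ncard_range_eq_nat_card_iff_injective [Finite V] {β : Type*} {f : V → β} :
    (range f).ncard = Nat.card V ↔ Injective f := by
  refine ⟨fun h => ?_, fun hf => ncard_range_of_injective hf⟩
  have hbij := rangeFactorization_surjective.bijective_of_nat_card_le
    (f := rangeFactorization f) (by rw [Nat.card_coe_set_eq, h])
  exact fun x y hxy => hbij.injective (Subtype.ext hxy)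

lemma Set.Infinite.exists_injective_forall_mem [Finite V] {β : Type*} {s : Set β}
    (hs : s.Infinite) :
    ∃ f : V → β, Injective f ∧ ∀ x, f x ∈ s := by
  obtain ⟨n, ⟨e⟩⟩ := Finite.exists_equiv_fin V
  refine ⟨fun x => hs.natEmbedding s (e x), fun x y hxy => ?_, fun x => (hs.natEmbedding s _).2⟩
  exact e.injective (Fin.val_injective ((hs.natEmbedding s).injective (Subtype.ext hxy)))

lemma opinionIndex_eq_card_iff [Fintype V] (G : SimpleGraph V) (ε : ℝ) :
    opinionIndex G ε = Fintype.card V ↔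
      ∃ η : V → ℝ, (∀ x, η x ∈ Icc (0 : ℝ) 1) ∧ IsStable G ε η ∧ Injective η := by
  set S := {n : ℕ | ∃ η : V → ℝ,
    (∀ x, η x ∈ Icc (0 : ℝ) 1) ∧ IsStable G ε η ∧ (range η).ncard = n}
  have hbdd : ∀ n ∈ S, n ≤ Fintype.card V := by
    rintro n ⟨η, -, -, rfl⟩
    rw [← Nat.card_eq_fintype_card, ← Nat.card_coe_set_eq]
    exact Finite.card_range_le η
  have hne : S.Nonempty := ⟨_, fun _ => 0, by simp, fun _ _ _ => Or.inl rfl, rfl⟩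
  have hmem_iff : Fintype.card V ∈ S ↔
      ∃ η : V → ℝ, (∀ x, η x ∈ Icc (0 : ℝ) 1) ∧ IsStable G ε η ∧ Injective η := by
    simp only [S, mem_ofPred_eq, ← Nat.card_eq_fintype_card, ncard_range_eq_nat_card_iff_injective]
  rw [← hmem_iff]
  refine ⟨fun h => h ▸ Nat.sSup_mem hne ⟨_, hbdd⟩, fun h => ?_⟩
  exact IsGreatest.csSup_eq ⟨h, hbdd⟩

lemma IsStable.colorable_two {G : SimpleGraph V} {ε : ℝ} {η : V → ℝ} (hη : IsStable G ε η)
    (hη01 : ∀ x, η x ∈ Icc (0 : ℝ) 1) (hinj : Injective η) (hε : 1 / 2 ≤ ε) :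
    G.Colorable 2 := by
  let C : G.Coloring Bool := SimpleGraph.Coloring.mk (fun x => decide (η x ≤ 1 / 2)) <| by
    intro x y hxy hsame
    have hfar : 1 / 2 < |η x - η y| :=
      hε.trans_lt ((hη hxy).resolve_left (hinj.ne hxy.ne))
    have hside : η x ≤ 1 / 2 ↔ η y ≤ 1 / 2 := by simpa using hsame
    obtain ⟨hx0, hx1⟩ := hη01 x
    obtain ⟨hy0, hy1⟩ := hη01 y
    rw [lt_abs] at hfar
    by_cases hx : η x ≤ 1 / 2
    · have hy := hside.mp hx
      rcases hfar with hfar | hfar <;> linarith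
    · have hy := mt hside.mpr hx
      rcases hfar with hfar | hfar <;> linarith
  simpa using C.colorable

lemma exists_injective_isStable_of_colorable_two [Finite V] {G : SimpleGraph V} {ε : ℝ}
    (hG : G.Colorable 2) (hε0 : 0 ≤ ε) (hε1 : ε < 1) :
    ∃ η : V → ℝ, (∀ x, η x ∈ Icc (0 : ℝ) 1) ∧ IsStable G ε η ∧ Injective η := by
  obtain ⟨C⟩ := hG
  obtain ⟨a, ha_inj, ha⟩ :=
    (Ico_infinite (by linarith : (0 : ℝ) < (1 - ε) / 2)).exists_injective_forall_mem (V := V)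
  let η : V → ℝ := fun x => if C x = 0 then a x else 1 - a x
  have hη01 : ∀ x, η x ∈ Icc (0 : ℝ) 1 := by
    intro x
    obtain ⟨hax0, hax⟩ := ha x
    by_cases hx : C x = 0 <;> simp only [η, hx, if_true, if_false, mem_Icc] <;>
      constructor <;> linarith
  have hfar : ∀ x y, C x ≠ C y → ε < |η x - η y| := by
    intro x y hne
    obtain ⟨hax0, hax⟩ := ha x
    obtain ⟨hay0, hay⟩ := ha y
    by_cases hx : C x = 0 <;> by_cases hy : C y = 0
    · exact absurd (hx.trans hy.symm) hne
    · simp only [η, hx, hy, if_true, if_false, lt_abs]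
      right; linarith
    · simp only [η, hx, hy, if_true, if_false, lt_abs]
      left; linarith
    · exact absurd (by omega) hne
  refine ⟨η, hη01, fun x y hxy => Or.inr (hfar x y (C.valid hxy)), fun x y hxy => ?_⟩
  by_cases hC : C x = C y
  · apply ha_inj
    by_cases hx : C x = 0 <;> simpa [η, hx, ← hC] using hxy
  · have := hfar x y hC
    rw [hxy, sub_self, abs_zero] at this
    linarith

end

theorem stmt4_general {V : Type*} [Fintype V] (G : SimpleGraph V)
    (ε : ℝ) (h1 : 1 / 2 < ε) (h2 : ε < 1) :
    opinionIndex G ε = Fintype.card V ↔ G.Colorable 2 := by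
  rw [opinionIndex_eq_card_iff]
  constructor
  · rintro ⟨η, hη01, hstable, hinj⟩
    exact hstable.colorable_two hη01 hinj h1.le
  · intro hG
    exact exists_injective_isStable_of_colorable_two hG (by linarith) h2

theorem stmt4 {V : Type*} [Fintype V] (G : SimpleGraph V) (hG : G.Connected)
    (ε : ℝ) (h1 : 1 / 2 < ε) (h2 : ε < 1) :
    opinionIndex G ε = Fintype.card V ↔ G.Colorable 2 :=
  stmt4_general G ε h1 h2
end

section
/- Let G = (V, E) be a finite graph containing a cycle of odd length, and let ε ∈ (1/2, 1]. Then every ε-stable configuration η : V → [0,1] is non-injective; in particular, if G has N vertices then μ_ε(G) < N. -/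
/-
If `ε ≥ 1/2` and `η` is injective, then adjacent vertices must carry opinions more than `1/2`
apart, so they lie on opposite sides of `1/2`. Colouring each vertex by whether `η ≤ 1/2` is
then a proper 2-colouring, which no graph with an odd cycle admits.
-/

open Set

lemma abs_sub_le_half_of_le_half_iff {a b : ℝ} (ha : a ∈ Icc (0 : ℝ) 1) (hb : b ∈ Icc (0 : ℝ) 1)
    (hab : a ≤ 1 / 2 ↔ b ≤ 1 / 2) : |a - b| ≤ 1 / 2 := by
  obtain ⟨ha0, ha1⟩ := ha
  obtain ⟨hb0, hb1⟩ := hb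
  rw [abs_sub_le_iff]
  by_cases ha' : a ≤ 1 / 2
  · have hb' := hab.mp ha'
    constructor <;> linarith
  · have hb' : 1 / 2 < b := lt_of_not_ge (mt hab.mpr ha')
    constructor <;> linarith

noncomputable def IsStable.halfColoring {V : Type*} {G : SimpleGraph V} {ε : ℝ} {η : V → ℝ}
    (hstab : IsStable G ε η) (hε : 1 / 2 ≤ ε) (hrange : ∀ x, η x ∈ Icc (0 : ℝ) 1)
    (hinj : Function.Injective η) : G.Coloring Bool :=
  SimpleGraph.Coloring.mk (fun x => decide (η x ≤ 1 / 2)) fun {x y} hadj hxy => by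
    have hfar : ε < |η x - η y| := (hstab hadj).resolve_left fun h => hadj.ne (hinj h)
    have hnear := abs_sub_le_half_of_le_half_iff (hrange x) (hrange y) (decide_eq_decide.mp hxy)
    linarith

theorem IsStable.not_injective_of_odd_loop {V : Type*} {G : SimpleGraph V} {ε : ℝ} {η : V → ℝ}
    (hstab : IsStable G ε η) (hε : 1 / 2 ≤ ε) (hrange : ∀ x, η x ∈ Icc (0 : ℝ) 1)
    {v : V} (w : G.Walk v v) (hodd : Odd w.length) : ¬ Function.Injective η := fun hinj => by
  have := ((hstab.halfColoring hε hrange hinj).odd_length_iff_not_congr w).mp hodd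
  tauto

lemma ncard_range_lt_card_of_not_injective {V α : Type*} [Fintype V] {f : V → α}
    (hf : ¬ Function.Injective f) : (range f).ncard < Fintype.card V := by
  rw [← image_univ, ← Nat.card_eq_fintype_card, ← ncard_univ]
  refine (ncard_image_le (f := f) (s := univ)).lt_of_ne fun h => hf ?_
  exact injOn_univ.mp (injOn_of_ncard_image_eq h)

theorem opinionIndex_lt_card {V : Type*} [Fintype V] [Nonempty V] {G : SimpleGraph V} {ε : ℝ}
    (h : ∀ η : V → ℝ, (∀ x, η x ∈ Icc (0 : ℝ) 1) → IsStable G ε η → ¬ Function.Injective η) :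
    opinionIndex G ε < Fintype.card V := by
  have hpos : 0 < Fintype.card V := Fintype.card_pos
  have hle : opinionIndex G ε ≤ Fintype.card V - 1 := by
    refine csSup_le' ?_
    rintro n ⟨η, hrange, hstab, rfl⟩
    have := ncard_range_lt_card_of_not_injective (h η hrange hstab)
    omega
  omega

theorem stmt14_general {V : Type*} [Fintype V] (G : SimpleGraph V)
    (hodd : ∃ (v : V) (w : G.Walk v v), w.IsCycle ∧ Odd w.length)
    (ε : ℝ) (h1 : 1 / 2 < ε) :
    (∀ η : V → ℝ, (∀ x, η x ∈ Set.Icc (0 : ℝ) 1) → IsStable G ε η →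
        ¬ Function.Injective η) ∧
      opinionIndex G ε < Fintype.card V := by
  obtain ⟨v, w, -, hw⟩ := hodd
  have : Nonempty V := ⟨v⟩
  have hnoninj : ∀ η : V → ℝ, (∀ x, η x ∈ Icc (0 : ℝ) 1) → IsStable G ε η →
      ¬ Function.Injective η := fun η hrange hstab =>
    hstab.not_injective_of_odd_loop h1.le hrange w hw
  exact ⟨hnoninj, opinionIndex_lt_card hnoninj⟩

theorem stmt14 {V : Type*} [Fintype V] (G : SimpleGraph V)
    (hodd : ∃ (v : V) (w : G.Walk v v), w.IsCycle ∧ Odd w.length)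
    (ε : ℝ) (h1 : 1 / 2 < ε) (h2 : ε ≤ 1) :
    (∀ η : V → ℝ, (∀ x, η x ∈ Set.Icc (0 : ℝ) 1) → IsStable G ε η →
        ¬ Function.Injective η) ∧
      opinionIndex G ε < Fintype.card V :=
  stmt14_general G hodd ε h1
end
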